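/- arXiv:1506.06224 — 2 statements merged into one kernel-verified Lean document; each statement's English description precedes it below -/
import Mathlib

section
/- For any function f : ℝⁿ → ℝ that is bounded, Hölder continuous with exponent s ∈ (0,1), and square-integrable, the sup norm satisfies ‖f‖_∞ ≤ 2 |B₁|^{-s/(2s+n)} ‖f‖_{L²}^{s/(s+n/2)} ‖f‖_{C^s}^{(n/2)/(s+n/2)}, where |B₁| is the volume of the unit ball in ℝⁿ. -/
/-!
If `|f x| = M > 0`, Hölder continuity keeps `|f| ≥ M / 2` on the ball of radius `r` around `x`
with `(B + H) r ^ s = M / 2`. Hence `‖f‖_{L²} ≥ (M / 2) (|B₁| r ^ n) ^ (1/2)`, and eliminating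
`r` through `r ^ s = M / (2 (B + H))` gives the bound.
-/

open MeasureTheory Metric Module
open scoped ENNReal

lemma enorm_mul_measure_rpow_le_eLpNorm {α E F : Type*} [MeasurableSpace α] {μ : Measure α}
    [NormedAddCommGroup E] [NormedAddCommGroup F] {f : α → E} {s : Set α}
    (hs : MeasurableSet s) {c : F} (hc : ∀ y ∈ s, ‖c‖ ≤ ‖f y‖) {p : ℝ≥0∞} (hp : p ≠ 0)
    (hp_top : p ≠ ∞) :
    ‖c‖ₑ * μ s ^ (1 / p.toReal) ≤ eLpNorm f p μ := by
  rw [← eLpNorm_indicator_const hs hp hp_top]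
  refine eLpNorm_mono fun y => ?_
  by_cases hy : y ∈ s
  · simpa [hy] using hc y hy
  · simp [hy]

lemma norm_sub_mul_rpow_le_norm {X E : Type*} [PseudoMetricSpace X] [SeminormedAddCommGroup E]
    {f : X → E} {x y : X} {C s r : ℝ} (hC : 0 ≤ C) (hs : 0 ≤ s)
    (hf : ∀ y, ‖f x - f y‖ ≤ C * dist x y ^ s) (hy : y ∈ closedBall x r) :
    ‖f x‖ - C * r ^ s ≤ ‖f y‖ := by
  have hxy : dist x y ≤ r := mem_closedBall'.mp hy
  have h_tri := norm_sub_norm_le (f x) (f y)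
  have h_mono : C * dist x y ^ s ≤ C * r ^ s := by gcongr
  linarith [hf y]

lemma half_norm_mul_sqrt_measure_ball_le_eLpNorm {E F : Type*} [NormedAddCommGroup E]
    [NormedSpace ℝ E] [MeasurableSpace E] [BorelSpace E] [FiniteDimensional ℝ E]
    (μ : Measure E) [μ.IsAddHaarMeasure] [NormedAddCommGroup F] {f : E → F}
    (hf : eLpNorm f 2 μ ≠ ∞) {x : E} {C s r : ℝ} (hC : 0 ≤ C) (hs : 0 ≤ s) (hr : 0 < r)
    (hfx : ∀ y, ‖f x - f y‖ ≤ C * dist x y ^ s) (hCr : C * r ^ s ≤ ‖f x‖ / 2) :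
    ‖f x‖ / 2 * (r ^ finrank ℝ E * (μ (ball 0 1)).toReal) ^ (1 / 2 : ℝ)
      ≤ (eLpNorm f 2 μ).toReal := by
  have hlow : ∀ y ∈ ball x r, ‖‖f x‖ / 2‖ ≤ ‖f y‖ := fun y hy => by
    have hy' := norm_sub_mul_rpow_le_norm hC hs hfx (ball_subset_closedBall hy)
    rw [Real.norm_of_nonneg (by positivity)]
    linarith
  have h := enorm_mul_measure_rpow_le_eLpNorm (μ := μ) measurableSet_ball hlow two_ne_zero
    ENNReal.ofNat_ne_top
  rw [Measure.addHaar_ball_of_pos μ x hr] at h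
  have h_real := ENNReal.toReal_mono hf h
  rw [ENNReal.toReal_mul, ← ENNReal.toReal_rpow, ENNReal.toReal_mul, toReal_enorm,
    ENNReal.toReal_ofReal (by positivity), Real.norm_of_nonneg (by positivity)] at h_real
  simpa using h_real

lemma le_rpow_mul_rpow_mul_rpow_of_mul_sqrt_le {a C V N r s : ℝ} {n : ℕ} (hs : 0 < s)
    (ha : 0 < a) (hC : 0 < C) (hV : 0 < V) (hr : 0 < r) (hCr : C * r ^ s = a)
    (h : a * (r ^ n * V) ^ (1 / 2 : ℝ) ≤ N) :
    a ≤ V ^ (-(s / (2 * s + n))) * N ^ (s / (s + n / 2)) * C ^ ((n / 2) / (s + n / 2)) := by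
  have hN : 0 < N := lt_of_lt_of_le (by positivity) h
  have hd : 0 < 2 * s + n := by positivity
  have hlog_h : Real.log a + (n * Real.log r + Real.log V) / 2 ≤ Real.log N := by
    have := Real.log_le_log (by positivity) h
    rwa [Real.log_mul ha.ne' (by positivity), Real.log_rpow (by positivity),
      Real.log_mul (by positivity) hV.ne', Real.log_pow, one_div_mul_eq_div] at this
  have hlog_Cr : Real.log C + s * Real.log r = Real.log a := by
    rw [← hCr, Real.log_mul hC.ne' (by positivity), Real.log_rpow hr]
  rw [← Real.log_le_log_iff ha (by positivity), Real.log_mul (by positivity) (by positivity),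
    Real.log_mul (by positivity) (by positivity), Real.log_rpow hV, Real.log_rpow hN,
    Real.log_rpow hC]
  have key : (2 * s + n) * Real.log a ≤ 2 * s * Real.log N + n * Real.log C - s * Real.log V := by
    linear_combination (2 * s) * hlog_h - n * hlog_Cr
  have hexp : -(s / (2 * s + n)) * Real.log V + s / (s + n / 2) * Real.log N
      + n / 2 / (s + n / 2) * Real.log C
      = (2 * s * Real.log N + n * Real.log C - s * Real.log V) / (2 * s + n) := by
    field_simp
    ring
  rw [hexp, le_div_iff₀ hd]
  linarith

theorem stmt0_general (n : ℕ) (s B H : ℝ) (hs : s ∈ Set.Ioo (0:ℝ) 1)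
    (hH : 0 ≤ H)
    (f : EuclideanSpace ℝ (Fin n) → ℝ)
    (hbd : ∀ x, |f x| ≤ B)
    (hhold : ∀ x y, |f x - f y| ≤ H * ‖x - y‖ ^ s)
    (hL2 : MemLp f 2 volume) :
    ∀ x, |f x| ≤
      2 * (volume (ball (0 : EuclideanSpace ℝ (Fin n)) 1)).toReal ^ (-(s / (2 * s + n)))
        * (eLpNorm f 2 volume).toReal ^ (s / (s + n / 2))
        * (B + H) ^ ((n / 2) / (s + n / 2)) := by
  intro x
  have hB : 0 ≤ B := (abs_nonneg _).trans (hbd x)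
  rcases (abs_nonneg (f x)).eq_or_lt with hfx | hfx
  · rw [← hfx]
    positivity
  have hC : 0 < B + H := by linarith [hbd x]
  have hV : 0 < (volume (ball (0 : EuclideanSpace ℝ (Fin n)) 1)).toReal :=
    ENNReal.toReal_pos (measure_ball_pos _ _ one_pos).ne' measure_ball_lt_top.ne
  set r := (|f x| / 2 / (B + H)) ^ s⁻¹
  have hr : 0 < r := by positivity
  have hCr : (B + H) * r ^ s = |f x| / 2 := by
    rw [Real.rpow_inv_rpow (by positivity) hs.1.ne']
    field_simp
  have hball := half_norm_mul_sqrt_measure_ball_le_eLpNorm volume hL2.eLpNorm_ne_top hC.le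
    hs.1.le hr (fun y => by
      rw [Real.norm_eq_abs, dist_eq_norm]
      exact (hhold x y).trans (by gcongr; linarith)) (by rw [Real.norm_eq_abs, hCr])
  rw [finrank_euclideanSpace_fin, Real.norm_eq_abs] at hball
  have hhalf := le_rpow_mul_rpow_mul_rpow_of_mul_sqrt_le hs.1 (by positivity) hC hV hr hCr hball
  linarith

/-- For any bounded, `s`-Hölder continuous, square-integrable `f : ℝⁿ → ℝ`,
`‖f‖_∞ ≤ 2 |B₁|^{-s/(2s+n)} ‖f‖_{L²}^{s/(s+n/2)} ‖f‖_{C^s}^{(n/2)/(s+n/2)}`,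
where the `C^s` norm is the sup norm `B` plus the Hölder seminorm `H`. -/
theorem stmt0 (n : ℕ) (hn : 0 < n) (s B H : ℝ) (hs : s ∈ Set.Ioo (0:ℝ) 1)
    (hB : 0 ≤ B) (hH : 0 ≤ H)
    (f : EuclideanSpace ℝ (Fin n) → ℝ)
    (hbd : ∀ x, |f x| ≤ B)
    (hhold : ∀ x y, |f x - f y| ≤ H * ‖x - y‖ ^ s)
    (hL2 : MemLp f 2 volume) :
    ∀ x, |f x| ≤
      2 * (volume (ball (0 : EuclideanSpace ℝ (Fin n)) 1)).toReal ^ (-(s / (2 * s + n)))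
        * (eLpNorm f 2 volume).toReal ^ (s / (s + n / 2))
        * (B + H) ^ ((n / 2) / (s + n / 2)) :=
  stmt0_general n s B H hs hH f hbd hhold hL2
end

section
/- Let f : ℝ × ℝ^{n-1} → ℝ satisfy the partial Hölder bound |f(τ,x) - f(τ,y)| ≤ M|x-y|^s for all τ and x,y, with 0 < s < 1, and let k satisfy the kernel difference bound |k(τ,x) - k(τ,y)| ≤ C|x-y| / min(|(τ,x)|,|(τ,y)|)^{n+2} whenever τ ≠ 0. Then for |τ| ≥ 1 and a fixed unit vector x₁ ∈ ℝ^{n-1}, assuming f(τ,0) = 0 for all τ: |∫_{ℝ^{n-1}} (k(τ,-y) - k(τ,x₁-y)) f(τ,y) dy| ≤ C' M |τ|^{s-2}, where C' depends only on C, n, s. -/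
open MeasureTheory

set_option maxHeartbeats 1000000 in
/-- Let `f(τ,·)` be `s`-Hölder with constant `M` and `f(τ,0)=0`, and let the kernel `k`
satisfy `|k(τ,x)-k(τ,y)| ≤ C|x-y|/min(|(τ,x)|,|(τ,y)|)^{n+2}` for `τ ≠ 0`,
where points of `ℝⁿ = ℝ × ℝ^{n-1}` are written `(τ,x)` (here `n = d+1`, `d ≥ 1`).
Then there is `C' = C'(C,n,s)` such that for `|τ| ≥ 1` and unit `x₁`,
`|∫ (k(τ,-y) - k(τ,x₁-y)) f(τ,y) dy| ≤ C' M |τ|^{s-2}`. -/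
theorem stmt19 (d : ℕ) (hd : 1 ≤ d) (s M C : ℝ) (hs : s ∈ Set.Ioo (0:ℝ) 1)
    (hM : 0 ≤ M) (hC : 0 ≤ C)
    (f : ℝ → EuclideanSpace ℝ (Fin d) → ℝ)
    (k : ℝ → EuclideanSpace ℝ (Fin d) → ℝ)
    (hf : ∀ (τ : ℝ) (x y : EuclideanSpace ℝ (Fin d)),
      |f τ x - f τ y| ≤ M * ‖x - y‖ ^ s)
    (hf0 : ∀ τ : ℝ, f τ 0 = 0)
    (hk : ∀ τ : ℝ, τ ≠ 0 → ∀ x y : EuclideanSpace ℝ (Fin d),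
      |k τ x - k τ y| ≤ C * ‖x - y‖ /
        min (Real.sqrt (τ^2 + ‖x‖^2)) (Real.sqrt (τ^2 + ‖y‖^2)) ^ ((d:ℝ) + 3)) :
    ∃ C' : ℝ, 0 < C' ∧
      ∀ τ : ℝ, 1 ≤ |τ| → ∀ x₁ : EuclideanSpace ℝ (Fin d), ‖x₁‖ = 1 →
        |∫ y : EuclideanSpace ℝ (Fin d), (k τ (-y) - k τ (x₁ - y)) * f τ y|
          ≤ C' * M * |τ| ^ (s - 2) := by
  obtain ⟨hs0, hs1⟩ := hs
  set r : ℝ := (d : ℝ) + 3 - s with hrdef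
  have hfr : Module.finrank ℝ (EuclideanSpace ℝ (Fin d)) = d := finrank_euclideanSpace_fin
  have hrd : (Module.finrank ℝ (EuclideanSpace ℝ (Fin d)) : ℝ) < r := by
    rw [hfr]; simp only [hrdef]; linarith
  have hr0 : 0 < r := by
    have h0d : (0:ℝ) ≤ d := Nat.cast_nonneg d
    simp only [hrdef]; linarith
  have hIble : Integrable (fun z : EuclideanSpace ℝ (Fin d) => (1 + ‖z‖) ^ (-r)) :=
    integrable_one_add_norm hrd
  set I : ℝ := ∫ z : EuclideanSpace ℝ (Fin d), (1 + ‖z‖) ^ (-r) with hIdef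
  have hI0 : 0 ≤ I := integral_nonneg fun z => Real.rpow_nonneg (by positivity) _
  clear_value I
  refine ⟨4 ^ ((d : ℝ) + 3) * C * I + 1, by positivity, ?_⟩
  intro τ hτ x₁ hx₁
  have htpos : (0:ℝ) < |τ| := lt_of_lt_of_le one_pos hτ
  have hτ0 : τ ≠ 0 := by simpa using htpos.ne'
  set e : ℝ := (d : ℝ) + 3 with hedef
  have he0 : (0:ℝ) < e := by positivity
  -- pointwise bound
  have hpt : ∀ y : EuclideanSpace ℝ (Fin d), |(k τ (-y) - k τ (x₁ - y)) * f τ y|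
      ≤ 4 ^ e * C * M * (|τ| + ‖y‖) ^ (-r) := by
    intro y
    set P : ℝ := |τ| + ‖y‖ with hPdef
    have hP : (0:ℝ) < P := by positivity
    have hy0 : (0:ℝ) ≤ ‖y‖ := norm_nonneg y
    have hfy : |f τ y| ≤ M * P ^ s := by
      have h1 := hf τ y 0
      rw [hf0 τ, sub_zero, sub_zero] at h1
      refine h1.trans (mul_le_mul_of_nonneg_left ?_ hM)
      exact Real.rpow_le_rpow hy0 (by simp [hPdef, htpos.le]) hs0.le
    have hkb := hk τ hτ0 (-y) (x₁ - y)
    have hnorm1 : ‖-y - (x₁ - y)‖ = 1 := by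
      have h : -y - (x₁ - y) = -x₁ := by abel
      rw [h, norm_neg, hx₁]
    rw [hnorm1, mul_one] at hkb
    have habs : τ ^ 2 = |τ| ^ 2 := (sq_abs τ).symm
    have hsq1 : P / 4 ≤ Real.sqrt (τ ^ 2 + ‖-y‖ ^ 2) := by
      rw [norm_neg, Real.le_sqrt' (by positivity), habs]
      simp only [hPdef]
      nlinarith [sq_nonneg (|τ| - ‖y‖)]
    have hsq2 : P / 4 ≤ Real.sqrt (τ ^ 2 + ‖x₁ - y‖ ^ 2) := by
      rw [Real.le_sqrt' (by positivity), habs]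
      have hv0 : (0:ℝ) ≤ ‖x₁ - y‖ := norm_nonneg _
      have hv1 : ‖y‖ - 1 ≤ ‖x₁ - y‖ := by
        have h2 := norm_sub_norm_le (y : EuclideanSpace ℝ (Fin d)) x₁
        rw [norm_sub_rev, hx₁] at h2
        linarith
      rcases le_or_gt ‖y‖ 2 with hc | hc
      · simp only [hPdef]
        nlinarith [sq_nonneg ‖x₁ - y‖, sq_nonneg (|τ| - 1)]
      · have hvsq : (‖y‖ - 1) ^ 2 ≤ ‖x₁ - y‖ ^ 2 := by nlinarith
        simp only [hPdef]
        nlinarith [sq_nonneg (|τ| - ‖y‖), sq_nonneg (‖y‖ - 2)]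
    have hpow : (P / 4) ^ e ≤ min (Real.sqrt (τ ^ 2 + ‖-y‖ ^ 2))
        (Real.sqrt (τ ^ 2 + ‖x₁ - y‖ ^ 2)) ^ e :=
      Real.rpow_le_rpow (by positivity) (le_min hsq1 hsq2) he0.le
    have hkb2 : |k τ (-y) - k τ (x₁ - y)| ≤ C / (P / 4) ^ e := by
      refine hkb.trans (div_le_div_of_nonneg_left hC ?_ hpow)
      exact Real.rpow_pos_of_pos (by positivity) _
    have hdiv : C / (P / 4) ^ e = 4 ^ e * C / P ^ e := by
      rw [Real.div_rpow hP.le (by norm_num : (0:ℝ) ≤ 4), div_div_eq_mul_div]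
      ring
    rw [hdiv] at hkb2
    calc |(k τ (-y) - k τ (x₁ - y)) * f τ y|
        = |k τ (-y) - k τ (x₁ - y)| * |f τ y| := abs_mul _ _
      _ ≤ (4 ^ e * C / P ^ e) * (M * P ^ s) := by
          refine mul_le_mul hkb2 hfy (abs_nonneg _) ?_
          positivity
      _ = 4 ^ e * C * M * (P ^ s / P ^ e) := by ring
      _ = 4 ^ e * C * M * P ^ (-r) := by
          rw [← Real.rpow_sub hP]
          congr 2
          simp only [hrdef, hedef]; ring
  -- integrability of the dominating function
  have hdom : Integrable (fun y : EuclideanSpace ℝ (Fin d) => (|τ| + ‖y‖) ^ (-r)) := by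
    refine hIble.mono' ?_ ?_
    · apply Continuous.aestronglyMeasurable
      apply Continuous.rpow_const (by continuity)
      intro y; left; positivity
    · filter_upwards with y
      rw [Real.norm_eq_abs, abs_of_nonneg (Real.rpow_nonneg (by positivity) _)]
      exact Real.rpow_le_rpow_of_nonpos (by positivity)
        (by linarith [norm_nonneg (y : EuclideanSpace ℝ (Fin d))]) (by linarith)
  -- scaling identity
  have hscale : (∫ y : EuclideanSpace ℝ (Fin d), (|τ| + ‖y‖) ^ (-r))
      = |τ| ^ ((d : ℝ) - r) * I := by
    have key := Measure.integral_comp_smul (volume : Measure (EuclideanSpace ℝ (Fin d)))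
      (fun y : EuclideanSpace ℝ (Fin d) => (|τ| + ‖y‖) ^ (-r)) |τ|
    have hlhs : (∫ x : EuclideanSpace ℝ (Fin d), (|τ| + ‖(|τ| : ℝ) • x‖) ^ (-r))
        = |τ| ^ (-r) * I := by
      have hpt2 : ∀ x : EuclideanSpace ℝ (Fin d), (|τ| + ‖(|τ| : ℝ) • x‖) ^ (-r)
          = |τ| ^ (-r) * (1 + ‖x‖) ^ (-r) := by
        intro x
        rw [norm_smul, Real.norm_eq_abs, abs_abs,
          show |τ| + |τ| * ‖x‖ = |τ| * (1 + ‖x‖) by ring,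
          Real.mul_rpow htpos.le (by positivity)]
      simp_rw [hpt2]
      rw [integral_const_mul, ← hIdef]
    rw [hfr, smul_eq_mul] at key
    have key2 : |τ| ^ (-r) * I
        = (|τ| ^ d)⁻¹ * ∫ y : EuclideanSpace ℝ (Fin d), (|τ| + ‖y‖) ^ (-r) := by
      rw [← hlhs, key, abs_inv, abs_pow, abs_abs]
    have hpd : (0:ℝ) < |τ| ^ d := pow_pos htpos d
    have hsplit : |τ| ^ ((d : ℝ) - r) = |τ| ^ d * |τ| ^ (-r) := by
      rw [sub_eq_add_neg, ← Real.rpow_natCast |τ| d, ← Real.rpow_add htpos]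
    rw [hsplit]
    field_simp at key2
    linarith [key2]
  -- put everything together
  have hb : |∫ y : EuclideanSpace ℝ (Fin d), (k τ (-y) - k τ (x₁ - y)) * f τ y|
      ≤ ∫ y : EuclideanSpace ℝ (Fin d), 4 ^ e * C * M * (|τ| + ‖y‖) ^ (-r) := by
    have h2 : ‖∫ y : EuclideanSpace ℝ (Fin d), (k τ (-y) - k τ (x₁ - y)) * f τ y‖
        ≤ ∫ y : EuclideanSpace ℝ (Fin d), 4 ^ e * C * M * (|τ| + ‖y‖) ^ (-r) :=
      norm_integral_le_of_norm_le (hdom.const_mul (4 ^ e * C * M))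
        (Filter.Eventually.of_forall fun y => by
          rw [Real.norm_eq_abs]; exact hpt y)
    simpa [Real.norm_eq_abs] using h2
  rw [integral_const_mul, hscale] at hb
  refine hb.trans ?_
  have hexp : |τ| ^ ((d : ℝ) - r) ≤ |τ| ^ (s - 2) := by
    apply Real.rpow_le_rpow_of_exponent_le hτ
    simp only [hrdef]; linarith
  have hpos2 : (0:ℝ) ≤ M * |τ| ^ (s - 2) := by positivity
  calc 4 ^ e * C * M * (|τ| ^ ((d : ℝ) - r) * I)
      = (4 ^ e * C * I * M) * |τ| ^ ((d : ℝ) - r) := by ring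
    _ ≤ (4 ^ e * C * I * M) * |τ| ^ (s - 2) := by
        apply mul_le_mul_of_nonneg_left hexp
        positivity
    _ ≤ (4 ^ e * C * I + 1) * M * |τ| ^ (s - 2) := by nlinarith
end
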